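/- arXiv:2207.01094 — 6 statements merged into one kernel-verified Lean document; each statement's English description precedes it below -/
import Mathlib

section
/- Over a field k of characteristic 2, the 3-dimensional Lie algebra fsl_2 with basis x, y, z and bracket [x,y] = z, [y,z] = x, [z,x] = y is simple: it is nonabelian and has no ideals other than 0 and itself. -/
private lemma fsl2_top_of_basis {k : Type*} [Field k] (I : Submodule k (Fin 3 → k))
    (h0 : ![(1:k),0,0] ∈ I) (h1 : ![(0:k),1,0] ∈ I) (h2 : ![(0:k),0,1] ∈ I) : I = ⊤ := by
  rw [eq_top_iff]
  intro v _
  have hv : v = v 0 • ![(1:k),0,0] + v 1 • ![(0:k),1,0] + v 2 • ![(0:k),0,1] := by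
    funext i; fin_cases i <;> simp
  rw [hv]
  exact I.add_mem (I.add_mem (I.smul_mem _ h0) (I.smul_mem _ h1)) (I.smul_mem _ h2)

/-- Over a field of characteristic 2, the 3-dimensional Lie algebra `fsl₂`
(realized as `Fin 3 → k` with the cross-product bracket, so `[x,y]=z`, `[y,z]=x`,
`[z,x]=y`) is simple: it is nonabelian and its only ideals are `0` and the whole algebra. -/
theorem fsl2_is_simple {k : Type*} [Field k] (hchar : CharP k 2) :
    (∃ u v : Fin 3 → k, crossProduct u v ≠ 0) ∧
    ∀ I : Submodule k (Fin 3 → k),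
      (∀ a : Fin 3 → k, ∀ b ∈ I, crossProduct a b ∈ I) → I = ⊥ ∨ I = ⊤ := by
  constructor
  · refine ⟨![1,0,0], ![0,1,0], fun h => ?_⟩
    have := congrFun h 2
    simp [cross_apply] at this
  · intro I hI
    rcases eq_or_ne I ⊥ with hbot | hbot
    · exact Or.inl hbot
    right
    obtain ⟨b, hbI, hb0⟩ := Submodule.exists_mem_ne_zero_of_ne_bot hbot
    -- pieces: ![b 0,0,0], ![0,b 1,0], ![0,0,b 2] ∈ I
    have p0 : ![b 0, 0, 0] ∈ I := by
      have h2 := hI ![1,0,0] _ (hI ![1,0,0] b hbI)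
      have : ![b 0, (0:k), 0] = b + crossProduct ![1,0,0] (crossProduct ![1,0,0] b) := by
        funext i; fin_cases i <;> simp [cross_apply] <;> ring
      rw [this]; exact I.add_mem hbI h2
    have p1 : ![0, b 1, 0] ∈ I := by
      have h2 := hI ![0,1,0] _ (hI ![0,1,0] b hbI)
      have : ![(0:k), b 1, 0] = b + crossProduct ![0,1,0] (crossProduct ![0,1,0] b) := by
        funext i; fin_cases i <;> simp [cross_apply] <;> ring
      rw [this]; exact I.add_mem hbI h2
    have p2 : ![0, 0, b 2] ∈ I := by
      have h2 := hI ![0,0,1] _ (hI ![0,0,1] b hbI)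
      have : ![(0:k), 0, b 2] = b + crossProduct ![0,0,1] (crossProduct ![0,0,1] b) := by
        funext i; fin_cases i <;> simp [cross_apply] <;> ring
      rw [this]; exact I.add_mem hbI h2
    -- some coordinate is nonzero
    have hex : b 0 ≠ 0 ∨ b 1 ≠ 0 ∨ b 2 ≠ 0 := by
      by_contra h
      push_neg at h
      exact hb0 (by funext i; fin_cases i <;> simp [h.1, h.2.1, h.2.2])
    have key : ![(1:k),0,0] ∈ I ∨ ![(0:k),1,0] ∈ I ∨ ![(0:k),0,1] ∈ I := by
      rcases hex with h | h | h
      · left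
        have := I.smul_mem (b 0)⁻¹ p0
        have e : (b 0)⁻¹ • ![b 0, (0:k), 0] = ![(1:k),0,0] := by
          funext i; fin_cases i <;> simp [inv_mul_cancel₀ h]
        rwa [e] at this
      · right; left
        have := I.smul_mem (b 1)⁻¹ p1
        have e : (b 1)⁻¹ • ![(0:k), b 1, 0] = ![(0:k),1,0] := by
          funext i; fin_cases i <;> simp [inv_mul_cancel₀ h]
        rwa [e] at this
      · right; right
        have := I.smul_mem (b 2)⁻¹ p2
        have e : (b 2)⁻¹ • ![(0:k), 0, b 2] = ![(0:k),0,1] := by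
          funext i; fin_cases i <;> simp [inv_mul_cancel₀ h]
        rwa [e] at this
    rcases key with h | h | h
    · have he2 : ![(0:k),0,1] ∈ I := by
        have := I.neg_mem (hI ![0,1,0] _ h)
        have e : -(crossProduct ![(0:k),1,0] ![1,0,0]) = ![(0:k),0,1] := by
          funext i; fin_cases i <;> simp [cross_apply]
        rwa [e] at this
      have he1 : ![(0:k),1,0] ∈ I := by
        have := hI ![0,0,1] _ h
        have e : crossProduct ![(0:k),0,1] ![1,0,0] = ![(0:k),1,0] := by
          funext i; fin_cases i <;> simp [cross_apply]
        rwa [e] at this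
      exact fsl2_top_of_basis I h he1 he2
    · have he2 : ![(0:k),0,1] ∈ I := by
        have := hI ![1,0,0] _ h
        have e : crossProduct ![(1:k),0,0] ![0,1,0] = ![(0:k),0,1] := by
          funext i; fin_cases i <;> simp [cross_apply]
        rwa [e] at this
      have he0 : ![(1:k),0,0] ∈ I := by
        have := I.neg_mem (hI ![0,0,1] _ h)
        have e : -(crossProduct ![(0:k),0,1] ![0,1,0]) = ![(1:k),0,0] := by
          funext i; fin_cases i <;> simp [cross_apply]
        rwa [e] at this
      exact fsl2_top_of_basis I he0 h he2
    · have he1 : ![(0:k),1,0] ∈ I := by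
        have := I.neg_mem (hI ![1,0,0] _ h)
        have e : -(crossProduct ![(1:k),0,0] ![0,0,1]) = ![(0:k),1,0] := by
          funext i; fin_cases i <;> simp [cross_apply]
        rwa [e] at this
      have he0 : ![(1:k),0,0] ∈ I := by
        have := hI ![0,1,0] _ h
        have e : crossProduct ![(0:k),1,0] ![0,0,1] = ![(1:k),0,0] := by
          funext i; fin_cases i <;> simp [cross_apply]
        rwa [e] at this
      exact fsl2_top_of_basis I he0 he1 h
end

section
/- Fix n ∈ ℕ and a field k of characteristic 2. Define N_1(n,k) to be the k-vector space with basis {e_α : α ∈ GF(2)^n \ {0}} and bracket: if |α| = |β| = 1 (parity of coordinate sum) then [e_α,e_β] = e_{α+β}; if |α| = 0 or |β| = 0 then [e_α,e_β] = (α·β) e_{α+β} where α·β ∈ GF(2) is the standard inner product; and [e_α,e_α] = 0. Then this bracket satisfies the Jacobi identity, so N_1(n,k) is a Lie algebra. -/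
/-- Parity `|α|` of the coordinate sum of `α ∈ GF(2)^n`. -/
def par {n : ℕ} (α : Fin n → ZMod 2) : ZMod 2 := ∑ i, α i

/-- Standard inner product `(α, β)` on `GF(2)^n`. -/
def dotp {n : ℕ} (α β : Fin n → ZMod 2) : ZMod 2 := ∑ i, α i * β i

/-- Structure constant of `N₁(n,k)` on `e_{α+β}`: equal to `1` if `|α| = |β| = 1`,
and to `(α,β)` if `|α| = 0` or `|β| = 0`. -/
noncomputable def cN1 (k : Type*) [Field k] {n : ℕ} (α β : Fin n → ZMod 2) : k :=
  if par α = 1 ∧ par β = 1 then 1 else if dotp α β = 1 then 1 else 0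

/-- The bracket of `N₁(n,k)`, defined on the free `k`-module with basis
`{e_α : α ∈ GF(2)^n \ {0}}` (realized as finitely supported functions), extended
bilinearly from `⁅e_α, e_β⁆ = cN1 α β • e_{α+β}` (and `0` when `α + β = 0`). -/
noncomputable def brN1 {k : Type*} [Field k] {n : ℕ}
    (f g : {v : Fin n → ZMod 2 // v ≠ 0} →₀ k) :
    {v : Fin n → ZMod 2 // v ≠ 0} →₀ k :=
  f.sum fun α a => g.sum fun β b =>
    if h : α.1 + β.1 ≠ 0 then
      Finsupp.single ⟨α.1 + β.1, h⟩ (a * b * cN1 k α.1 β.1)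
    else 0

/-- The basis vector `e_α` of `N₁(n,k)`. -/
noncomputable def eN1 (k : Type*) [Field k] {n : ℕ} (α : Fin n → ZMod 2) (h : α ≠ 0) :
    {v : Fin n → ZMod 2 // v ≠ 0} →₀ k :=
  Finsupp.single ⟨α, h⟩ 1

/-! Written as a bilinear map, the bracket is bilinear for free, and its symmetry, alternation
and Jacobi identity only need to be checked on basis vectors. With the convention `e_0 = 0` one
has `⁅e_α, e_β⁆ = c(α, β) e_{α+β}` for all `α, β`, so the Jacobiator of `e_α, e_β, e_γ` is a
multiple of `e_{α+β+γ}`. Its coefficient depends only on the parities of `α, β, γ` and their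
pairwise inner products, so it vanishes by a finite check over `GF(2)`. -/

open Finsupp

section Jacobiator

variable {R M : Type*} [CommSemiring R] [AddCommMonoid M] [Module R M]

def jacobiator (B : M →ₗ[R] M →ₗ[R] M) (f g h : M) : M :=
  B f (B g h) + B g (B h f) + B h (B f g)

variable (B : M →ₗ[R] M →ₗ[R] M)

lemma jacobiator_rotate (f g h : M) : jacobiator B f g h = jacobiator B g h f := by
  unfold jacobiator; abel

lemma jacobiator_add_left (f₁ f₂ g h : M) :
    jacobiator B (f₁ + f₂) g h = jacobiator B f₁ g h + jacobiator B f₂ g h := by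
  simp only [jacobiator, map_add, LinearMap.add_apply]; abel

lemma jacobiator_smul_left (a : R) (f g h : M) :
    jacobiator B (a • f) g h = a • jacobiator B f g h := by
  simp only [jacobiator, map_smul, LinearMap.smul_apply, smul_add]

end Jacobiator

section FreeModule

variable {R ι : Type*}

lemma jacobiator_eq_zero_of_single_left [CommSemiring R]
    (B : (ι →₀ R) →ₗ[R] (ι →₀ R) →ₗ[R] (ι →₀ R)) {g h : ι →₀ R}
    (hsingle : ∀ i, jacobiator B (single i 1) g h = 0) (f : ι →₀ R) :
    jacobiator B f g h = 0 := by
  induction f using induction_linear with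
  | zero => simp [jacobiator]
  | add f₁ f₂ h₁ h₂ => rw [jacobiator_add_left, h₁, h₂, add_zero]
  | single i a => rw [← smul_single_one, jacobiator_smul_left, hsingle, smul_zero]

/-- Rotating the arguments of the Jacobiator lets us expand one argument at a time. -/
lemma jacobiator_eq_zero_of_single [CommSemiring R]
    (B : (ι →₀ R) →ₗ[R] (ι →₀ R) →ₗ[R] (ι →₀ R))
    (hB : ∀ i j l, jacobiator B (single i 1) (single j 1) (single l 1) = 0)
    (f g h : ι →₀ R) : jacobiator B f g h = 0 := by
  refine jacobiator_eq_zero_of_single_left B (fun i => ?_) f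
  rw [jacobiator_rotate]
  refine jacobiator_eq_zero_of_single_left B (fun j => ?_) g
  rw [jacobiator_rotate]
  refine jacobiator_eq_zero_of_single_left B (fun l => ?_) h
  rw [jacobiator_rotate]
  exact hB i j l

lemma apply_self_eq_zero_of_single {N : Type*} [CommRing R] [CharP R 2] [AddCommGroup N]
    [Module R N] (B : (ι →₀ R) →ₗ[R] (ι →₀ R) →ₗ[R] N) (hsymm : ∀ f g, B f g = B g f)
    (hdiag : ∀ i, B (single i 1) (single i 1) = 0) (f : ι →₀ R) : B f f = 0 := by
  induction f using induction_linear with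
  | zero => simp
  | add f g hf hg =>
    simp only [map_add, LinearMap.add_apply, hf, hg, hsymm g f, zero_add, add_zero]
    rw [← two_smul R, CharTwo.two_eq_zero, zero_smul]
  | single i a =>
    rw [← smul_single_one]
    simp only [map_smul, LinearMap.smul_apply, hdiag, smul_zero]

end FreeModule

section StructureConstants

variable {k : Type*} [Field k] {n : ℕ}

local notation "V" => Fin n → ZMod 2

lemma par_add (α β : V) : par (α + β) = par α + par β := by
  simp [par, Finset.sum_add_distrib]

lemma dotp_add_right (α β γ : V) : dotp α (β + γ) = dotp α β + dotp α γ := by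
  simp [dotp, mul_add, Finset.sum_add_distrib]

lemma dotp_comm (α β : V) : dotp α β = dotp β α := by
  simp [dotp, mul_comm]

def structConst (p q d : ZMod 2) : ZMod 2 := if p = 1 ∧ q = 1 then 1 else d

lemma structConst_jacobi (pA pB pC dAB dBC dAC : ZMod 2) :
    structConst pB pC dBC * structConst pA (pB + pC) (dAB + dAC)
      + structConst pC pA dAC * structConst pB (pC + pA) (dBC + dAB)
      + structConst pA pB dAB * structConst pC (pA + pB) (dAC + dBC) = 0 := by
  revert pA pB pC dAB dBC dAC; decide

lemma cN1_eq_castHom [CharP k 2] (α β : V) :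
    cN1 k α β = ZMod.castHom (dvd_refl 2) k (structConst (par α) (par β) (dotp α β)) := by
  unfold cN1 structConst
  split_ifs with hpar hdot
  · simp
  · simp [hdot]
  · have eq_zero_of_ne_one : ∀ d : ZMod 2, d ≠ 1 → d = 0 := by decide
    simp [eq_zero_of_ne_one _ hdot]

lemma cN1_comm (α β : V) : cN1 k α β = cN1 k β α := by
  unfold cN1
  rw [dotp_comm]
  exact if_congr and_comm rfl rfl

lemma cN1_zero_right (α : V) : cN1 k α 0 = 0 := by
  simp [cN1, par, dotp]

lemma cN1_jacobi [CharP k 2] (α β γ : V) :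
    cN1 k β γ * cN1 k α (β + γ) + cN1 k γ α * cN1 k β (γ + α)
      + cN1 k α β * cN1 k γ (α + β) = 0 := by
  simp only [cN1_eq_castHom, par_add, dotp_add_right, ← map_mul, ← map_add]
  rw [dotp_comm γ α, dotp_comm β α, dotp_comm γ β, structConst_jacobi, map_zero]

end StructureConstants

section Bracket

variable {k : Type*} [Field k] {n : ℕ}

local notation "V" => Fin n → ZMod 2
local notation "S" => {v : Fin n → ZMod 2 // v ≠ 0}
local notation "N1" => {v : Fin n → ZMod 2 // v ≠ 0} →₀ k

variable (k) in
/-- Setting `e_0 = 0` makes `⁅e_α, e_β⁆ = cN1 α β • e_{α+β}` hold without a case split. -/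
noncomputable def eN1₀ (v : V) : N1 := if h : v = 0 then 0 else eN1 k v h

noncomputable def brN1Lin : N1 →ₗ[k] N1 →ₗ[k] N1 :=
  linearCombination k fun α => linearCombination k fun β => cN1 k α.1 β.1 • eN1₀ k (α.1 + β.1)

lemma brN1Lin_apply (f g : N1) : brN1Lin f g = brN1 f g := by
  simp only [brN1Lin, brN1, linearCombination_apply, LinearMap.finsupp_sum_apply,
    LinearMap.smul_apply, smul_sum, smul_smul]
  refine sum_congr fun α _ => sum_congr fun β _ => ?_
  by_cases h0 : α.1 + β.1 = 0
  · simp [eN1₀, h0]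
  · rw [eN1₀, dif_neg h0, dif_pos h0, eN1, smul_single_one, mul_assoc]

lemma brN1Lin_single_single (α β : S) :
    brN1Lin (single α 1) (single β 1) = cN1 k α.1 β.1 • eN1₀ k (α.1 + β.1) := by
  simp [brN1Lin]

lemma brN1Lin_single_eN1₀ (α : S) (v : V) :
    brN1Lin (single α 1) (eN1₀ k v) = cN1 k α.1 v • eN1₀ k (α.1 + v) := by
  by_cases hv : v = 0
  · simp [eN1₀, hv, cN1_zero_right]
  · rw [eN1₀, dif_neg hv, eN1]
    exact brN1Lin_single_single α ⟨v, hv⟩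

lemma brN1Lin_flip : (brN1Lin : N1 →ₗ[k] N1 →ₗ[k] N1).flip = brN1Lin := by
  refine LinearMap.ext_basis Finsupp.basisSingleOne Finsupp.basisSingleOne fun α β => ?_
  simp only [LinearMap.flip_apply, coe_basisSingleOne, brN1Lin_single_single, cN1_comm,
    add_comm]

lemma brN1Lin_comm (f g : N1) : brN1Lin f g = brN1Lin g f := by
  rw [← LinearMap.flip_apply, brN1Lin_flip]

lemma brN1Lin_self [CharP k 2] (f : N1) : brN1Lin f f = 0 :=
  apply_self_eq_zero_of_single _ brN1Lin_comm
    (fun α => by simp [brN1Lin_single_single, eN1₀, ZModModule.add_self]) f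

lemma jacobiator_brN1Lin [CharP k 2] (f g h : N1) : jacobiator brN1Lin f g h = 0 := by
  refine jacobiator_eq_zero_of_single _ (fun α β γ => ?_) f g h
  simp only [jacobiator, brN1Lin_single_single, map_smul, brN1Lin_single_eN1₀, smul_smul]
  rw [show β.1 + (γ.1 + α.1) = α.1 + (β.1 + γ.1) by abel,
    show γ.1 + (α.1 + β.1) = α.1 + (β.1 + γ.1) by abel, ← add_smul, ← add_smul, cN1_jacobi,
    zero_smul]

end Bracket

/-- The bracket of `N₁(n,k)` is alternating, symmetric
(`= -` antisymmetric in characteristic 2), bilinear, and satisfies the Jacobi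
identity; hence `N₁(n,k)` is a Lie algebra. -/
theorem N1_is_lie_algebra {n : ℕ} {k : Type*} [Field k] (hchar : CharP k 2) :
    (∀ f : {v : Fin n → ZMod 2 // v ≠ 0} →₀ k, brN1 f f = 0) ∧
    (∀ f g : {v : Fin n → ZMod 2 // v ≠ 0} →₀ k, brN1 f g = brN1 g f) ∧
    (∀ f g h : {v : Fin n → ZMod 2 // v ≠ 0} →₀ k,
      brN1 (f + g) h = brN1 f h + brN1 g h) ∧
    (∀ f g h : {v : Fin n → ZMod 2 // v ≠ 0} →₀ k,
      brN1 f (g + h) = brN1 f g + brN1 f h) ∧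
    (∀ (a : k) (f g : {v : Fin n → ZMod 2 // v ≠ 0} →₀ k),
      brN1 (a • f) g = a • brN1 f g ∧ brN1 f (a • g) = a • brN1 f g) ∧
    (∀ f g h : {v : Fin n → ZMod 2 // v ≠ 0} →₀ k,
      brN1 f (brN1 g h) + brN1 g (brN1 h f) + brN1 h (brN1 f g) = 0) := by
  simp only [← brN1Lin_apply]
  exact ⟨brN1Lin_self, brN1Lin_comm, brN1Lin.map_add₂, fun f => map_add (brN1Lin f),
    fun a f g => ⟨brN1Lin.map_smul₂ a f g, map_smul (brN1Lin f) a g⟩, jacobiator_brN1Lin⟩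
end

section
/- Let n = 2m be even and k a field of characteristic 2. Then the Lie algebra N_1(n,k) is simple: every nonzero ideal equals the whole algebra. -/
/-! The toral derivations `t_i = (ad e_{α_i})²` act diagonally on the basis:
`t_i e_p = λ_i(p) e_p` with `λ_i(p) = p_i + |p| ∈ {0, 1}`, so `t_i` and `1 - t_i` are the
projections onto the two weight spaces and an ideal is stable under both. Since
`∑ i, λ_i(p) = (n + 1) |p| = |p|` for even `n`, the weights `λ(p)` determine `p`; projecting a
nonzero element of an ideal onto a common weight space therefore isolates a single `e_β`.
Bracketing with `e_δ` whose structure constant is `1` then moves from `e_β` to an odd basis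
vector, from there to every even one, and from the even vector `e_{α_i} + e_{α_j}` with
`β_i ≠ β_j` to every odd `e_β`. -/

section Vectors

variable {n : ℕ}

lemma zmod_two_eq_zero_or_one : ∀ x : ZMod 2, x = 0 ∨ x = 1 := by decide

lemma zmod_two_eq_one_of_ne_zero : ∀ {x : ZMod 2}, x ≠ 0 → x = 1 := by decide

lemma par_zero : par (0 : Fin n → ZMod 2) = 0 := by
  simp [par]

lemma par_add_s13 (a b : Fin n → ZMod 2) : par (a + b) = par a + par b := by
  simp [par, Finset.sum_add_distrib]

lemma par_single (i : Fin n) : par (Pi.single i 1 : Fin n → ZMod 2) = 1 := by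
  simp [par]

lemma dotp_comm_s13 (a b : Fin n → ZMod 2) : dotp a b = dotp b a := by
  simp [dotp, mul_comm]

lemma dotp_zero_left (a : Fin n → ZMod 2) : dotp 0 a = 0 := by
  simp [dotp]

lemma dotp_add_left (a b c : Fin n → ZMod 2) : dotp (a + b) c = dotp a c + dotp b c := by
  simp [dotp, add_mul, Finset.sum_add_distrib]

lemma dotp_single_left (i : Fin n) (a : Fin n → ZMod 2) : dotp (Pi.single i 1) a = a i := by
  simp [dotp, Pi.single_apply]

lemma dotp_self (a : Fin n → ZMod 2) : dotp a a = par a := by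
  have idem : ∀ x : ZMod 2, x * x = x := by decide
  simp [dotp, par, idem]

lemma ne_zero_of_par_eq_one {a : Fin n → ZMod 2} (h : par a = 1) : a ≠ 0 := by
  rintro rfl
  simp [par_zero] at h

lemma exists_eq_one_of_ne_zero {a : Fin n → ZMod 2} (h : a ≠ 0) : ∃ i, a i = 1 := by
  obtain ⟨i, hi⟩ := Function.ne_iff.mp h
  exact ⟨i, zmod_two_eq_one_of_ne_zero hi⟩

lemma exists_eq_zero_of_par_eq_one (hn : Even n) {a : Fin n → ZMod 2} (h : par a = 1) :
    ∃ j, a j = 0 := by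
  by_contra! hne
  have hone : a = fun _ => 1 := funext fun j => zmod_two_eq_one_of_ne_zero (hne j)
  simp [hone, par, ZMod.natCast_eq_zero_iff_even.mpr hn] at h

def toralWeight (p : Fin n → ZMod 2) : Fin n → ZMod 2 := fun i => p i + par p

lemma par_toralWeight (hn : Even n) (p : Fin n → ZMod 2) : par (toralWeight p) = par p := by
  simp [par, toralWeight, Finset.sum_add_distrib, ZMod.natCast_eq_zero_iff_even.mpr hn]

lemma toralWeight_injective (hn : Even n) : Function.Injective (toralWeight (n := n)) := by
  intro p q h
  have hpar : par p = par q := by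
    rw [← par_toralWeight hn p, ← par_toralWeight hn q, h]
  funext i
  simpa [toralWeight, hpar] using congrFun h i

end Vectors

abbrev N1Index (n : ℕ) := {v : Fin n → ZMod 2 // v ≠ 0}

section Bracket

variable {k : Type*} [Field k] {n : ℕ}

lemma brN1_single_single (p q : N1Index n) (a b : k) :
    brN1 (Finsupp.single p a) (Finsupp.single q b) =
      if h : p.1 + q.1 ≠ 0 then Finsupp.single ⟨p.1 + q.1, h⟩ (a * b * cN1 k p.1 q.1)
      else 0 := by
  unfold brN1
  rw [Finsupp.sum_single_index, Finsupp.sum_single_index]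
  · split <;> simp
  · rw [Finsupp.sum_single_index] <;> split <;> simp

lemma brN1_zero_right (f : N1Index n →₀ k) : brN1 f 0 = 0 := by
  simp [brN1]

lemma brN1_add_right (f g g' : N1Index n →₀ k) :
    brN1 f (g + g') = brN1 f g + brN1 f g' := by
  unfold brN1
  rw [← Finsupp.sum_add]
  refine Finsupp.sum_congr fun α _ => ?_
  rw [Finsupp.sum_add_index']
  · intro β; split <;> simp
  · intro β b b'; split <;> simp [mul_add, add_mul, Finsupp.single_add]

lemma brN1_single_single_of_add_eq {p q r : N1Index n} (h : p.1 + q.1 = r.1) (a b : k) :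
    brN1 (Finsupp.single p a) (Finsupp.single q b) = Finsupp.single r (a * b * cN1 k p.1 q.1) := by
  rw [brN1_single_single, dif_pos (h ▸ r.2)]
  congr 1
  exact Subtype.ext h

lemma brN1_single_single_of_add_eq_zero {p q : N1Index n} (h : p.1 + q.1 = 0) (a b : k) :
    brN1 (Finsupp.single p a) (Finsupp.single q b) = 0 := by
  rw [brN1_single_single, dif_neg (not_not.mpr h)]

lemma brN1_eN1_eN1 {α β γ : Fin n → ZMod 2} (hα : α ≠ 0) (hβ : β ≠ 0) (hγ : γ ≠ 0)
    (h : α + β = γ) : brN1 (eN1 k α hα) (eN1 k β hβ) = cN1 k α β • eN1 k γ hγ := by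
  rw [eN1, eN1, eN1, brN1_single_single_of_add_eq (r := ⟨γ, hγ⟩) h, Finsupp.smul_single,
    smul_eq_mul, one_mul, one_mul, mul_one]

lemma cN1_zero_left (β : Fin n → ZMod 2) : cN1 k 0 β = 0 := by
  simp [cN1, par_zero, dotp_zero_left]

lemma cN1_eq_one_of_par (α β : Fin n → ZMod 2) (hα : par α = 1) (hβ : par β = 1) :
    cN1 k α β = 1 := by
  simp [cN1, hα, hβ]

lemma cN1_eq_one_of_dotp (α β : Fin n → ZMod 2) (h : dotp α β = 1) : cN1 k α β = 1 := by
  simp [cN1, h]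

end Bracket

section Toral

variable {k : Type*} [Field k] {n : ℕ}

lemma pi_single_one_ne_zero (i : Fin n) : (Pi.single i 1 : Fin n → ZMod 2) ≠ 0 :=
  ne_zero_of_par_eq_one (par_single i)

lemma cN1_mul_cN1_single (i : Fin n) (p : Fin n → ZMod 2) :
    cN1 k (Pi.single i 1) p * cN1 k (Pi.single i 1) (Pi.single i 1 + p) =
      if toralWeight p i = 1 then 1 else 0 := by
  rcases zmod_two_eq_zero_or_one (par p) with hp | hp <;>
    rcases zmod_two_eq_zero_or_one (p i) with hpi | hpi <;>
    simp [cN1, toralWeight, par_single, par_add_s13, dotp_single_left, hp, hpi]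

noncomputable def toral (k : Type*) [Field k] (i : Fin n) (x : N1Index n →₀ k) :
    N1Index n →₀ k :=
  brN1 (eN1 k _ (pi_single_one_ne_zero i)) (brN1 (eN1 k _ (pi_single_one_ne_zero i)) x)

lemma toral_single (i : Fin n) (p : N1Index n) (b : k) :
    toral k i (Finsupp.single p b) =
      if toralWeight p.1 i = 1 then Finsupp.single p b else 0 := by
  rw [toral, eN1]
  by_cases hpe : p.1 = Pi.single i 1
  · have hw : toralWeight p.1 i ≠ 1 := by simp [hpe, toralWeight, par_single]
    rw [brN1_single_single_of_add_eq_zero (by rw [hpe, ZModModule.add_self]), brN1_zero_right,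
      if_neg hw]
  · have hsum : Pi.single i 1 + p.1 ≠ 0 := fun h => hpe (by
      rw [← ZModModule.neg_eq_self (Pi.single i 1 : Fin n → ZMod 2)]
      exact (neg_eq_of_add_eq_zero_right h).symm)
    rw [brN1_single_single_of_add_eq (r := ⟨_, hsum⟩) rfl,
      brN1_single_single_of_add_eq (r := p) (by simp [← add_assoc, ZModModule.add_self]),
      show 1 * (1 * b * cN1 k _ p.1) * cN1 k _ _ =
        cN1 k (Pi.single i 1) p.1 * cN1 k (Pi.single i 1) (Pi.single i 1 + p.1) * b by ring,
      cN1_mul_cN1_single]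
    split_ifs <;> simp

lemma toral_add (i : Fin n) (x y : N1Index n →₀ k) :
    toral k i (x + y) = toral k i x + toral k i y := by
  rw [toral, toral, toral, brN1_add_right, brN1_add_right]

lemma toral_eq_filter (i : Fin n) (x : N1Index n →₀ k) :
    toral k i x = x.filter (fun q => toralWeight q.1 i = 1) := by
  induction x using Finsupp.induction with
  | zero => rw [toral, brN1_zero_right, brN1_zero_right, Finsupp.filter_zero]
  | single_add p b f _ _ ih =>
    rw [toral_add, ih, toral_single, Finsupp.filter_add]
    split_ifs with hw
    · rw [Finsupp.filter_single_of_pos (fun q : N1Index n => toralWeight q.1 i = 1) hw]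
    · rw [Finsupp.filter_single_of_neg (fun q : N1Index n => toralWeight q.1 i = 1) hw, zero_add]

end Toral

def IsN1Ideal {k : Type*} [Field k] {n : ℕ} (I : Submodule k (N1Index n →₀ k)) : Prop :=
  ∀ x, ∀ y ∈ I, brN1 x y ∈ I

section Ideal

variable {k : Type*} [Field k] {n : ℕ} {I : Submodule k (N1Index n →₀ k)}

lemma toral_mem (hI : IsN1Ideal I) (i : Fin n) {x : N1Index n →₀ k} (hx : x ∈ I) :
    toral k i x ∈ I :=
  hI _ _ (hI _ _ hx)

lemma filter_toralWeight_eq_mem (hI : IsN1Ideal I) {x : N1Index n →₀ k}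
    (hx : x ∈ I) (i : Fin n) (b : ZMod 2) : x.filter (fun q => toralWeight q.1 i = b) ∈ I := by
  have hproj : x.filter (fun q => toralWeight q.1 i = 1) ∈ I :=
    toral_eq_filter (k := k) i x ▸ toral_mem hI i hx
  rcases zmod_two_eq_zero_or_one b with rfl | rfl
  · have hcompl : x.filter (fun q => toralWeight q.1 i = 0) =
        x - x.filter (fun q => toralWeight q.1 i = 1) := by
      ext q
      rcases zmod_two_eq_zero_or_one (toralWeight q.1 i) with h | h <;>
        simp [h]
    rw [hcompl]
    exact sub_mem hx hproj
  · exact hproj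

lemma filter_forall_toralWeight_eq_mem (hI : IsN1Ideal I)
    {x : N1Index n →₀ k} (hx : x ∈ I) (b : Fin n → ZMod 2) (s : Finset (Fin n)) :
    x.filter (fun q => ∀ i ∈ s, toralWeight q.1 i = b i) ∈ I := by
  induction s using Finset.induction_on with
  | empty =>
    convert hx
    ext
    simp
  | insert i s _ ih =>
    convert filter_toralWeight_eq_mem hI ih i (b i) using 1
    ext q
    simp only [Finsupp.filter_apply, Finset.forall_mem_insert, ite_and]

lemma single_apply_mem_of_mem (hn : Even n) (hI : IsN1Ideal I)
    {x : N1Index n →₀ k} (hx : x ∈ I) (p : N1Index n) : Finsupp.single p (x p) ∈ I := by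
  convert filter_forall_toralWeight_eq_mem hI hx (toralWeight p.1) Finset.univ using 1
  rw [← Finsupp.filter_eq']
  ext q
  simp only [Finsupp.filter_apply, Finset.mem_univ, forall_const, ← funext_iff,
    (toralWeight_injective hn).eq_iff, Subtype.ext_iff]

lemma eN1_mem_of_apply_ne_zero (hn : Even n) (hI : IsN1Ideal I)
    {x : N1Index n →₀ k} (hx : x ∈ I) {p : N1Index n} (hp : x p ≠ 0) : eN1 k p.1 p.2 ∈ I := by
  have h := I.smul_mem (x p)⁻¹ (single_apply_mem_of_mem hn hI hx p)
  rwa [Finsupp.smul_single, smul_eq_mul, inv_mul_cancel₀ hp] at h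

lemma eN1_mem_of_cN1_eq_one (hI : IsN1Ideal I)
    {β γ : Fin n → ZMod 2} (hβ : β ≠ 0) (hγ : γ ≠ 0) (hmem : eN1 k β hβ ∈ I)
    (hc : cN1 k (γ + β) β = 1) : eN1 k γ hγ ∈ I := by
  have hδ : γ + β ≠ 0 := fun h => by
    rw [h, cN1_zero_left] at hc
    exact zero_ne_one hc
  have h := hI (eN1 k (γ + β) hδ) _ hmem
  rwa [brN1_eN1_eN1 hδ hβ hγ (by rw [add_assoc, ZModModule.add_self, add_zero]), hc,
    one_smul] at h

lemma exists_par_eq_one_eN1_mem (hI : IsN1Ideal I)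
    {β : Fin n → ZMod 2} (hβ : β ≠ 0) (hmem : eN1 k β hβ ∈ I) :
    ∃ (γ : Fin n → ZMod 2) (hγ : γ ≠ 0), par γ = 1 ∧ eN1 k γ hγ ∈ I := by
  rcases zmod_two_eq_zero_or_one (par β) with hpar | hpar
  · obtain ⟨i, hi⟩ := exists_eq_one_of_ne_zero hβ
    have hγpar : par (Pi.single i 1 + β) = 1 := by rw [par_add_s13, par_single, hpar, add_zero]
    refine ⟨_, ne_zero_of_par_eq_one hγpar, hγpar, eN1_mem_of_cN1_eq_one hI hβ _ hmem ?_⟩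
    rw [add_assoc, ZModModule.add_self, add_zero]
    exact cN1_eq_one_of_dotp _ _ (by rw [dotp_single_left, hi])
  · exact ⟨β, hβ, hpar, hmem⟩

lemma eN1_mem_of_par_eq_zero (hI : IsN1Ideal I)
    {γ : Fin n → ZMod 2} (hγ : γ ≠ 0) (hγpar : par γ = 1) (hmem : eN1 k γ hγ ∈ I)
    {μ : Fin n → ZMod 2} (hμ : μ ≠ 0) (hμpar : par μ = 0) : eN1 k μ hμ ∈ I :=
  eN1_mem_of_cN1_eq_one hI hγ hμ hmem
    (cN1_eq_one_of_par _ _ (by rw [par_add_s13, hμpar, hγpar, zero_add]) hγpar)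

lemma eN1_mem_of_par_eq_one (hn : Even n) (hI : IsN1Ideal I)
    (heven : ∀ (μ : Fin n → ZMod 2) (hμ : μ ≠ 0), par μ = 0 → eN1 k μ hμ ∈ I)
    {β : Fin n → ZMod 2} (hβ : β ≠ 0) (hβpar : par β = 1) : eN1 k β hβ ∈ I := by
  obtain ⟨i, hi⟩ := exists_eq_one_of_ne_zero hβ
  obtain ⟨j, hj⟩ := exists_eq_zero_of_par_eq_one hn hβpar
  set μ : Fin n → ZMod 2 := Pi.single i 1 + Pi.single j 1
  have hμpar : par μ = 0 := by rw [par_add_s13, par_single, par_single]; decide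
  have hμ : μ ≠ 0 := by
    have hij : i ≠ j := fun h => by simp [h, hj] at hi
    intro h
    simpa [μ, hij] using congrFun h i
  have hdot : dotp (β + μ) μ = 1 := by
    rw [dotp_add_left, dotp_self, hμpar, add_zero, dotp_comm_s13, dotp_add_left, dotp_single_left,
      dotp_single_left, hi, hj, add_zero]
  exact eN1_mem_of_cN1_eq_one hI hμ hβ (heven μ hμ hμpar) (cN1_eq_one_of_dotp _ _ hdot)

lemma eN1_mem_of_eN1_mem (hn : Even n) (hI : IsN1Ideal I)
    {β : Fin n → ZMod 2} (hβ : β ≠ 0) (hmem : eN1 k β hβ ∈ I)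
    (γ : Fin n → ZMod 2) (hγ : γ ≠ 0) : eN1 k γ hγ ∈ I := by
  obtain ⟨δ, hδ, hδpar, hδmem⟩ := exists_par_eq_one_eN1_mem hI hβ hmem
  have heven := fun μ hμ hμpar => eN1_mem_of_par_eq_zero hI hδ hδpar hδmem (μ := μ) hμ hμpar
  rcases zmod_two_eq_zero_or_one (par γ) with hpar | hpar
  · exact heven γ hγ hpar
  · exact eN1_mem_of_par_eq_one hn hI heven hγ hpar

end Ideal

theorem N1_simple_even_general {m n : ℕ} (hn : n = 2 * m)
    {k : Type*} [Field k]
    (I : Submodule k ({v : Fin n → ZMod 2 // v ≠ 0} →₀ k))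
    (hI : ∀ x : {v : Fin n → ZMod 2 // v ≠ 0} →₀ k, ∀ y ∈ I, brN1 x y ∈ I)
    (hne : I ≠ ⊥) : I = ⊤ := by
  have hev : Even n := ⟨m, by omega⟩
  obtain ⟨x, hx, hx0⟩ := (Submodule.ne_bot_iff I).mp hne
  obtain ⟨p, hp⟩ := Finsupp.ne_iff.mp hx0
  have hall (q : N1Index n) : eN1 k q.1 q.2 ∈ I :=
    eN1_mem_of_eN1_mem hev hI p.2 (eN1_mem_of_apply_ne_zero hev hI hx hp) q.1 q.2
  rw [eq_top_iff, ← (Finsupp.basisSingleOne (R := k)).span_eq, Submodule.span_le]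
  rintro _ ⟨q, rfl⟩
  exact hall q

/-- For `n = 2m` even and `k` a field of characteristic 2, the Lie
algebra `N₁(n,k)` is simple: every nonzero ideal is the whole algebra. -/
theorem N1_simple_even {m n : ℕ} (hn : n = 2 * m)
    {k : Type*} [Field k] (hchar : CharP k 2)
    (I : Submodule k ({v : Fin n → ZMod 2 // v ≠ 0} →₀ k))
    (hI : ∀ x : {v : Fin n → ZMod 2 // v ≠ 0} →₀ k, ∀ y ∈ I, brN1 x y ∈ I)
    (hne : I ≠ ⊥) : I = ⊤ :=
  N1_simple_even_general hn I hI hne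
end

section
/- Let L be a simple thin Lie algebra over GF(2) of dimension 2^n − 1, and let α ∈ Φ be a root such that ad(e_α) is not nilpotent, with characteristic polynomial t^r(t+1)^{2s}, s > 0. Then there exist roots β and α+β such that the subalgebra spanned by e_α, e_β, e_{α+β} is isomorphic to fsl_2 (i.e., [e_α,e_β] = e_{α+β}, [e_β,e_{α+β}] = e_α, [e_{α+β},e_α] = e_β). -/
/-!
By thinness, `ad(e α)²` sends every `e β` to `0` or to `e β`, so the generalized `1`-eigenspace
`L₁` of `ad(e α)` is spanned by the `e β` it fixes, and `L₁ ≠ 0` because `ad(e α)` is not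
nilpotent. In characteristic `2` the square of a derivation is a derivation; this makes
`L₁ + [L₁, L₁]` an ideal, hence all of `L` by simplicity. The `e α`-coordinate vanishes on `L₁`,
so some bracket `[e β, e (α + β)]` with `e β, e (α + β) ∈ L₁` is nonzero, hence equal to `e α`,
and `e α, e β, e (α + β)` span a copy of `fsl₂`.
-/

open Submodule

theorem LinearMap.not_isNilpotent_of_isRoot_charpoly {R M : Type*} [CommRing R] [IsDomain R]
    [AddCommGroup M] [Module R M] [Module.Finite R M] [Module.Free R M] {φ : Module.End R M}
    {c : R} (hc : c ≠ 0) (h : φ.charpoly.IsRoot c) : ¬IsNilpotent φ := fun hφ ↦ by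
  rw [Polynomial.IsRoot, hφ.charpoly_eq_X_pow_finrank, Polynomial.eval_pow,
    Polynomial.eval_X] at h
  exact hc (eq_zero_of_pow_eq_zero h)

theorem ZModModule.leibniz_lie_lie {L : Type*} [LieRing L] [Module (ZMod 2) L] (x u v : L) :
    ⁅x, ⁅x, ⁅u, v⁆⁆⁆ = ⁅⁅x, ⁅x, u⁆⁆, v⁆ + ⁅u, ⁅x, ⁅x, v⁆⁆⁆ := by
  rw [leibniz_lie x u v, lie_add, leibniz_lie x ⁅x, u⁆ v, leibniz_lie x u ⁅x, v⁆,
    ZModModule.add_add_add_cancel]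

theorem exists_lieSubmodule_coe_eq_span {R L M : Type*} [CommRing R] [LieRing L]
    [LieAlgebra R L] [AddCommGroup M] [Module R M] [LieRingModule L M] [LieModule R L M]
    {X : Set L} {G : Set M} (hX : span R X = ⊤) (h : ∀ x ∈ X, ∀ g ∈ G, ⁅x, g⁆ ∈ span R G) :
    ∃ N : LieSubmodule R L M, (N : Submodule R M) = span R G := by
  refine (span R G).exists_lieSubmodule_coe_eq_iff L |>.mpr fun x m hm ↦ ?_
  have hx : x ∈ span R X := hX ▸ mem_top
  induction hx, hm using span_induction₂ with
  | mem_mem x g hx hg => exact h x hx g hg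
  | zero_left => simp
  | zero_right => simp
  | add_left _ _ _ _ _ _ h₁ h₂ => rw [add_lie]; exact add_mem h₁ h₂
  | add_right _ _ _ _ _ _ h₁ h₂ => rw [lie_add]; exact add_mem h₁ h₂
  | smul_left _ _ _ _ _ h => rw [smul_lie]; exact smul_mem _ _ h
  | smul_right _ _ _ _ _ h => rw [lie_smul]; exact smul_mem _ _ h

section Thin

variable {Γ L : Type*} [AddCommGroup Γ] [LieRing L]

/-- The bracket relations of a thin Lie algebra, for `e : Γ → L` extended by `e 0 = 0`. -/
structure IsThin (e : Γ → L) : Prop where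
  map_zero : e 0 = 0
  lie_eq_zero_or_eq : ∀ α β, ⁅e α, e β⁆ = 0 ∨ ⁅e α, e β⁆ = e (α + β)

/-- The `e β` for these `β` span the generalized `1`-eigenspace `L₁` of `ad (e α)`. -/
def adSqFixedRoots (e : Γ → L) (α : Γ) : Set Γ :=
  {β | e β ≠ 0 ∧ ⁅e α, ⁅e α, e β⁆⁆ = e β}

/-- A spanning set of `L₁ + [L₁, L₁]`. -/
def adSqFixedGenerators (e : Γ → L) (α : Γ) : Set L :=
  e '' adSqFixedRoots e α ∪ Set.image2 (fun β δ ↦ ⁅e β, e δ⁆) (adSqFixedRoots e α)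
    (adSqFixedRoots e α)

theorem coord_apply_eq_zero_of_ne [LieAlgebra (ZMod 2) L]
    (b : Module.Basis {v : Γ // v ≠ 0} (ZMod 2) L) {e : Γ → L}
    (hb : ∀ v (hv : v ≠ 0), e v = b ⟨v, hv⟩) (he0 : e 0 = 0) {α γ : Γ} (hα : α ≠ 0)
    (hγ : γ ≠ α) : b.coord ⟨α, hα⟩ (e γ) = 0 := by
  by_cases h0 : γ = 0
  · rw [h0, he0, map_zero]
  rw [hb γ h0, Module.Basis.coord_apply, Module.Basis.repr_self, Finsupp.single_apply_eq_zero]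
  exact fun h ↦ absurd (congrArg Subtype.val h) hγ.symm

namespace IsThin

variable {e : Γ → L} {α β γ : Γ}

theorem lie_eq_of_mem (he : IsThin e) (hβ : β ∈ adSqFixedRoots e α) :
    ⁅e α, e β⁆ = e (α + β) :=
  (he.lie_eq_zero_or_eq α β).resolve_left fun h ↦ hβ.1 (by rw [← hβ.2, h, lie_zero])

theorem lie_add_eq_of_mem (he : IsThin e) (hβ : β ∈ adSqFixedRoots e α) :
    ⁅e α, e (α + β)⁆ = e β := by
  rw [← he.lie_eq_of_mem hβ]
  exact hβ.2

theorem ne_zero_of_mem (he : IsThin e) (hβ : β ∈ adSqFixedRoots e α) : β ≠ 0 := by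
  rintro rfl
  exact hβ.1 he.map_zero

theorem add_ne_zero_of_mem (he : IsThin e) (hβ : β ∈ adSqFixedRoots e α) : α + β ≠ 0 := by
  intro h
  apply hβ.1
  rw [← he.lie_add_eq_of_mem hβ, h, he.map_zero, lie_zero]

variable [Module (ZMod 2) Γ]

theorem lie_lie_eq_zero_or_eq (he : IsThin e) (α β : Γ) :
    ⁅e α, ⁅e α, e β⁆⁆ = 0 ∨ ⁅e α, ⁅e α, e β⁆⁆ = e β := by
  rcases he.lie_eq_zero_or_eq α β with h | h
  · simp [h]
  · simpa [h, ← add_assoc, ZModModule.add_self] using he.lie_eq_zero_or_eq α (α + β)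

theorem lie_lie_eq_zero_of_notMem (he : IsThin e) (hβ : β ∉ adSqFixedRoots e α) :
    ⁅e α, ⁅e α, e β⁆⁆ = 0 := by
  rcases he.lie_lie_eq_zero_or_eq α β with h | h
  · exact h
  by_cases h0 : e β = 0
  · rw [h, h0]
  · exact absurd ⟨h0, h⟩ hβ

theorem lie_add_eq_of_lie_ne_zero (he : IsThin e) (hne : ⁅e β, e (α + β)⁆ ≠ 0) :
    ⁅e β, e (α + β)⁆ = e α := by
  rw [(he.lie_eq_zero_or_eq β (α + β)).resolve_left hne, add_left_comm, ZModModule.add_self,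
    add_zero]

variable [LieAlgebra (ZMod 2) L]

theorem lie_mem_span_of_mem (he : IsThin e) (γ : Γ) (hβ : β ∈ adSqFixedRoots e α) :
    ⁅e γ, e β⁆ ∈ span (ZMod 2) (adSqFixedGenerators e α) := by
  by_cases hγ : γ ∈ adSqFixedRoots e α
  · exact subset_span (Or.inr ⟨γ, hγ, β, hβ, rfl⟩)
  rcases he.lie_eq_zero_or_eq γ β with h | h
  · rw [h]
    exact zero_mem _
  by_cases h0 : e (γ + β) = 0
  · rw [h, h0]
    exact zero_mem _
  -- `ad(e α)²` is a derivation killing `e γ` and fixing `e β`, so it fixes `⁅e γ, e β⁆`.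
  refine subset_span (Or.inl ⟨γ + β, ⟨h0, ?_⟩, h.symm⟩)
  rw [← h, ZModModule.leibniz_lie_lie, he.lie_lie_eq_zero_of_notMem hγ, hβ.2, zero_lie, zero_add]

theorem lie_mem_span_generators (he : IsThin e) (γ : Γ) {g : L}
    (hg : g ∈ adSqFixedGenerators e α) :
    ⁅e γ, g⁆ ∈ span (ZMod 2) (adSqFixedGenerators e α) := by
  have lie_lie_mem : ∀ μ ν δ, δ ∈ adSqFixedRoots e α →
      ⁅⁅e μ, e ν⁆, e δ⁆ ∈ span (ZMod 2) (adSqFixedGenerators e α) := by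
    intro μ ν δ hδ
    rcases he.lie_eq_zero_or_eq μ ν with h | h
    · rw [h, zero_lie]
      exact zero_mem _
    · rw [h]
      exact he.lie_mem_span_of_mem _ hδ
  rcases hg with ⟨β, hβ, rfl⟩ | ⟨β, hβ, δ, hδ, rfl⟩
  · exact he.lie_mem_span_of_mem γ hβ
  rw [leibniz_lie, ← lie_skew (e β)]
  exact add_mem (lie_lie_mem γ β δ hδ) (neg_mem (lie_lie_mem γ δ β hβ))

theorem nonempty_adSqFixedRoots (he : IsThin e) (b : Module.Basis {v : Γ // v ≠ 0} (ZMod 2) L)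
    (hb : ∀ v (hv : v ≠ 0), e v = b ⟨v, hv⟩)
    (h : ¬IsNilpotent (LieAlgebra.ad (ZMod 2) L (e α))) : (adSqFixedRoots e α).Nonempty := by
  by_contra hS
  rw [Set.not_nonempty_iff_eq_empty] at hS
  refine h ⟨2, b.ext fun i ↦ ?_⟩
  rw [← hb i.1 i.2]
  exact he.lie_lie_eq_zero_of_notMem (hS ▸ Set.notMem_empty _)

theorem coord_eq_zero_of_mem_generators (he : IsThin e)
    (b : Module.Basis {v : Γ // v ≠ 0} (ZMod 2) L) (hb : ∀ v (hv : v ≠ 0), e v = b ⟨v, hv⟩)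
    (hα : α ≠ 0) (h : ∀ β ∈ adSqFixedRoots e α, ⁅e β, e (α + β)⁆ = 0) {g : L}
    (hg : g ∈ adSqFixedGenerators e α) : b.coord ⟨α, hα⟩ g = 0 := by
  rcases hg with ⟨β, hβ, rfl⟩ | ⟨β, hβ, δ, -, rfl⟩
  · refine coord_apply_eq_zero_of_ne b hb he.map_zero hα fun hβα ↦ he.add_ne_zero_of_mem hβ ?_
    rw [hβα, ZModModule.add_self]
  change b.coord ⟨α, hα⟩ ⁅e β, e δ⁆ = 0
  by_cases hβδ : β + δ = α
  · rw [eq_sub_of_add_eq' hβδ, ZModModule.sub_eq_add, h β hβ, LinearMap.map_zero]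
  rcases he.lie_eq_zero_or_eq β δ with hl | hl
  · rw [hl, LinearMap.map_zero]
  · rw [hl]
    exact coord_apply_eq_zero_of_ne b hb he.map_zero hα hβδ

theorem exists_mem_lie_ne_zero [LieAlgebra.IsSimple (ZMod 2) L] (he : IsThin e)
    (b : Module.Basis {v : Γ // v ≠ 0} (ZMod 2) L) (hb : ∀ v (hv : v ≠ 0), e v = b ⟨v, hv⟩)
    (hα : α ≠ 0) (hS : (adSqFixedRoots e α).Nonempty) :
    ∃ β ∈ adSqFixedRoots e α, ⁅e β, e (α + β)⁆ ≠ 0 := by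
  by_contra! h
  obtain ⟨I, hI⟩ : ∃ I : LieIdeal (ZMod 2) L,
      I.toSubmodule = span (ZMod 2) (adSqFixedGenerators e α) :=
    exists_lieSubmodule_coe_eq_span b.span_eq fun _ ⟨i, hi⟩ _ hg ↦
      hi ▸ hb i.1 i.2 ▸ he.lie_mem_span_generators i.1 hg
  obtain ⟨β₀, hβ₀⟩ := hS
  have hI_top : I = ⊤ := by
    refine (LieAlgebra.IsSimple.eq_bot_or_eq_top I).resolve_left fun hbot ↦ hβ₀.1 ?_
    have : e β₀ ∈ I.toSubmodule := hI ▸ subset_span (Or.inl ⟨β₀, hβ₀, rfl⟩)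
    rwa [LieSubmodule.mem_toSubmodule, hbot, LieSubmodule.mem_bot] at this
  have hα_mem : e α ∈ span (ZMod 2) (adSqFixedGenerators e α) := by
    rw [← hI, hI_top]
    exact mem_top
  have := (span_le (p := LinearMap.ker (b.coord ⟨α, hα⟩))).mpr
    (fun _ ↦ he.coord_eq_zero_of_mem_generators b hb hα h) hα_mem
  rw [LinearMap.mem_ker, hb α hα, Module.Basis.coord_apply, Module.Basis.repr_self,
    Finsupp.single_eq_same] at this
  exact one_ne_zero this

end IsThin

end Thin

/-- Let `L` be a simple thin Lie algebra over `GF(2)` of dimension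
`2^n - 1` and `α` a root with `ad (e α)` having characteristic polynomial
`t^r (t+1)^(2s)`, `s > 0`.  Then there is a root `β` such that
`e α, e β, e (α+β)` span a copy of `fsl₂`. -/
theorem thin_simple_fsl2_subalgebra {n : ℕ} {L : Type*}
    [LieRing L] [LieAlgebra (ZMod 2) L] [LieAlgebra.IsSimple (ZMod 2) L]
    [Module.Finite (ZMod 2) L]
    (b : Module.Basis {v : Fin n → ZMod 2 // v ≠ 0} (ZMod 2) L)
    (e : (Fin n → ZMod 2) → L)
    (he : ∀ (v : Fin n → ZMod 2) (hv : v ≠ 0), e v = b ⟨v, hv⟩)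
    (he0 : e 0 = 0)
    (hbr : ∀ α β : Fin n → ZMod 2, ⁅e α, e β⁆ = 0 ∨ ⁅e α, e β⁆ = e (α + β))
    (α : Fin n → ZMod 2) (hα : α ≠ 0) (r s : ℕ) (hs : 0 < s)
    (hchar : LinearMap.charpoly (LieAlgebra.ad (ZMod 2) L (e α)) =
      Polynomial.X ^ r * (Polynomial.X + 1) ^ (2 * s)) :
    ∃ β : Fin n → ZMod 2, β ≠ 0 ∧ α + β ≠ 0 ∧
      ⁅e α, e β⁆ = e (α + β) ∧ ⁅e β, e (α + β)⁆ = e α ∧ ⁅e (α + β), e α⁆ = e β := by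
  have hthin : IsThin e := ⟨he0, hbr⟩
  have hnil : ¬IsNilpotent (LieAlgebra.ad (ZMod 2) L (e α)) := by
    refine LinearMap.not_isNilpotent_of_isRoot_charpoly one_ne_zero ?_
    rw [hchar, Polynomial.IsRoot, Polynomial.eval_mul, Polynomial.eval_pow, Polynomial.eval_pow,
      Polynomial.eval_add, Polynomial.eval_X, Polynomial.eval_one, ZModModule.add_self,
      zero_pow (by omega), mul_zero]
  obtain ⟨β, hβ, hne⟩ :=
    hthin.exists_mem_lie_ne_zero b he hα (hthin.nonempty_adSqFixedRoots b he hnil)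
  refine ⟨β, hthin.ne_zero_of_mem hβ, hthin.add_ne_zero_of_mem hβ, hthin.lie_eq_of_mem hβ,
    hthin.lie_add_eq_of_lie_ne_zero hne, ?_⟩
  rw [← lie_skew, hthin.lie_add_eq_of_mem hβ, ZModModule.neg_eq_self]
end

section
/- Let L be a simple thin Lie algebra over GF(2) of dimension 2^n − 1 and α a root with ad(e_α) having characteristic polynomial t^r(t+1)^{2s}, s > 0. Then s(s+1) ≥ 2^n − 2. -/
/-!
Put `f = ad (e α)`. Thinness makes `f² (e γ)` either `0` or `e γ`; the roots `γ` of the second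
kind form `Φ₁`, which is stable under `γ ↦ α + γ`, and since `(f - 1)² = f² - 1` in
characteristic `2`, the `e γ` with `γ ∈ Φ₁` are independent vectors in the generalized
`1`-eigenspace, so `|Φ₁| ≤ 2s`. In characteristic `2`, `f²` is a derivation, so for `γ ∈ Φ₁`
and any `β` the bracket `⁅e β, e γ⁆` is either in `[e Φ₁, e Φ₁]` or a root vector of `Φ₁`.
Hence `span (e Φ₁ ∪ [e Φ₁, e Φ₁])` is a nonzero ideal, i.e. all of `L`, and `L` is spanned by
the `e γ` with `0 ≠ γ ∈ Φ₁ ∪ (Φ₁ + Φ₁)`. A sum `γ + δ ∉ {0, α}` comes from at least the four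
ordered pairs `(γ, δ), (δ, γ), (α + γ, α + δ), (α + δ, α + γ)` of a set of `|Φ₁| (|Φ₁| - 2)`
pairs, so `2 ^ n - 1 ≤ |Φ₁| + 1 + |Φ₁| (|Φ₁| - 2) / 4 ≤ s (s + 1) + 1`.
-/

open Finset Module Polynomial Set Submodule LieAlgebra
open scoped Pointwise

theorem Polynomial.rootMultiplicity_one_X_pow_mul_X_add_one_pow {K : Type*} [CommRing K]
    [IsDomain K] [CharP K 2] (r k : ℕ) :
    ((X : K[X]) ^ r * (X + 1) ^ k).rootMultiplicity 1 = k := by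
  have hX : (X + 1 : K[X]) = X - C 1 := by rw [C_1, CharTwo.sub_eq_add]
  rw [hX, rootMultiplicity_mul (mul_ne_zero (pow_ne_zero _ X_ne_zero)
      (pow_ne_zero _ (X_sub_C_ne_zero 1))), rootMultiplicity_X_sub_C_pow,
    rootMultiplicity_eq_zero (by simp), zero_add]

theorem Module.End.card_le_rootMultiplicity_one_of_apply_apply_eq_self {K M ι : Type*} [Field K]
    [CharP K 2] [AddCommGroup M] [Module K M] [FiniteDimensional K M] [Fintype ι]
    (f : End K M) {v : ι → M} (hv : LinearIndependent K v) (hfv : ∀ i, f (f (v i)) = v i) :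
    Fintype.card ι ≤ f.charpoly.rootMultiplicity 1 := by
  have hgen : span K (range v) ≤ f.genEigenspace 1 (2 : ℕ) := by
    rw [span_le]
    rintro _ ⟨i, rfl⟩
    rw [SetLike.mem_coe, End.mem_genEigenspace_nat, LinearMap.mem_ker, one_smul, sq, End.mul_apply]
    simp only [LinearMap.sub_apply, End.one_apply, map_sub, hfv]
    rw [show v i - f (v i) - (f (v i) - v i) = (2 : K) • (v i - f (v i)) by module,
      CharTwo.two_eq_zero, zero_smul]
  rw [← finrank_span_eq_card hv]
  exact (Submodule.finrank_mono hgen).trans (LinearMap.finrank_genEigenspace_le f 1 2)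

namespace Finset
variable {G : Type*} [AddCommGroup G] [DecidableEq G]

theorem two_mul_card_le_card_filter_add_mem_pair (hG : ∀ x : G, x + x = 0) {α : G}
    (hα : α ≠ 0) {Φ : Finset G} (hΦ : ∀ γ ∈ Φ, α + γ ∈ Φ) :
    2 * #Φ ≤ #{p ∈ Φ ×ˢ Φ | p.1 + p.2 ∈ ({0, α} : Finset G)} := by
  have hinj : Function.Injective fun p : G × G => (p.1, p.2 + p.1) := fun p q h => by
    simp only [Prod.mk.injEq] at h
    exact Prod.ext h.1 (by simpa [h.1] using h.2)
  calc 2 * #Φ = #((Φ ×ˢ {0, α}).image fun p => (p.1, p.2 + p.1)) := by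
        rw [card_image_of_injective _ hinj, card_product, card_pair hα.symm, mul_comm]
    _ ≤ _ := by
        refine card_le_card fun p hp => ?_
        simp only [mem_image, mem_product, mem_insert, mem_singleton] at hp
        obtain ⟨⟨γ, t⟩, ⟨hγ, ht⟩, rfl⟩ := hp
        simp only [mem_filter, mem_product, mem_insert, mem_singleton, add_left_comm γ t, hG,
          add_zero]
        rcases ht with rfl | rfl
        · simpa using hγ
        · exact ⟨⟨hγ, hΦ γ hγ⟩, Or.inr rfl⟩

theorem four_le_card_filter_add_eq (hG : ∀ x : G, x + x = 0) {α : G} (hα : α ≠ 0)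
    {Φ : Finset G} (hΦ : ∀ γ ∈ Φ, α + γ ∈ Φ) {γ δ : G} (hγ : γ ∈ Φ) (hδ : δ ∈ Φ)
    (hγδ0 : γ + δ ≠ 0) (hγδα : γ + δ ≠ α) :
    4 ≤ #{p ∈ Φ ×ˢ Φ | p.1 + p.2 = γ + δ} := by
  have hcancel : ∀ x y : G, x + (x + y) = y := fun x y => by rw [← add_assoc, hG, zero_add]
  have h4 : #({γ, δ, α + γ, α + δ} : Finset G) = 4 := by
    have hγδ : γ ≠ δ := fun h => hγδ0 (by rw [h, hG])
    have hγαδ : γ ≠ α + δ := fun h => hγδα (by rw [h, add_assoc, hG, add_zero])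
    have hδαγ : δ ≠ α + γ := fun h => hγδα (by rw [h, add_left_comm, hG, add_zero])
    have hαx : ∀ x : G, x ≠ α + x := fun x h => hα (add_eq_right.1 h.symm)
    rw [card_insert_of_notMem, card_insert_of_notMem, card_pair]
    · exact fun h => hγδ (add_left_cancel h)
    · simp only [mem_insert, mem_singleton, not_or]
      exact ⟨hδαγ, hαx δ⟩
    · simp only [mem_insert, mem_singleton, not_or]
      exact ⟨hγδ, hαx γ, hγαδ⟩
  calc 4 = #(({γ, δ, α + γ, α + δ} : Finset G).image fun x => (x, x + (γ + δ))) := by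
        rw [card_image_of_injective _ fun x y h => (Prod.ext_iff.1 h).1, h4]
    _ ≤ _ := by
        refine card_le_card fun p hp => ?_
        simp only [mem_image, mem_insert, mem_singleton] at hp
        obtain ⟨x, hx, rfl⟩ := hp
        simp only [mem_filter, mem_product, hcancel, and_true]
        rcases hx with rfl | rfl | rfl | rfl
        · exact ⟨hγ, by rwa [hcancel]⟩
        · exact ⟨hδ, by rwa [add_comm γ, hcancel]⟩
        · exact ⟨hΦ γ hγ, by rw [add_assoc, hcancel]; exact hΦ δ hδ⟩
        · exact ⟨hΦ δ hδ, by rw [add_assoc, add_comm γ, hcancel]; exact hΦ γ hγ⟩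

theorem four_mul_card_add_self_sdiff_add_two_mul_card_le (hG : ∀ x : G, x + x = 0) {α : G}
    (hα : α ≠ 0) {Φ : Finset G} (hΦ : ∀ γ ∈ Φ, α + γ ∈ Φ) :
    4 * #((Φ + Φ) \ {0, α}) + 2 * #Φ ≤ #Φ * #Φ := by
  have hsplit := card_filter_add_card_filter_not (s := Φ ×ˢ Φ)
    (fun p => p.1 + p.2 ∈ ({0, α} : Finset G))
  rw [card_product] at hsplit
  have hD : 4 * #((Φ + Φ) \ {0, α}) ≤ #{p ∈ Φ ×ˢ Φ | p.1 + p.2 ∉ ({0, α} : Finset G)} := by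
    refine mul_card_image_le_card_of_maps_to (f := fun p => p.1 + p.2) ?_ 4 ?_
    · intro p hp
      simp only [mem_filter, mem_product] at hp
      exact mem_sdiff.2 ⟨add_mem_add hp.1.1 hp.1.2, hp.2⟩
    · intro σ hσ
      obtain ⟨hσ, hσ0α⟩ := mem_sdiff.1 hσ
      obtain ⟨γ, hγ, δ, hδ, rfl⟩ := mem_add.1 hσ
      refine (four_le_card_filter_add_eq hG hα hΦ hγ hδ (fun h => hσ0α (by simp [h]))
        (fun h => hσ0α (by simp [h]))).trans (card_le_card fun p hp => ?_)
      simp only [mem_filter] at hp ⊢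
      exact ⟨⟨hp.1, hp.2 ▸ hσ0α⟩, hp.2⟩
  have := two_mul_card_le_card_filter_add_mem_pair hG hα hΦ
  omega

theorem four_mul_card_erase_zero_union_add_self_le (hG : ∀ x : G, x + x = 0) {α : G}
    (hα : α ≠ 0) {Φ : Finset G} (hΦ : ∀ γ ∈ Φ, α + γ ∈ Φ) :
    4 * #((Φ ∪ (Φ + Φ)).erase 0) ≤ #Φ * #Φ + 2 * #Φ + 4 := by
  have hsub : (Φ ∪ (Φ + Φ)).erase 0 ⊆ Φ ∪ insert α ((Φ + Φ) \ {0, α}) := by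
    intro γ
    simp only [mem_erase, mem_union, mem_insert, mem_sdiff, mem_singleton]
    tauto
  have hcard := (card_le_card hsub).trans ((card_union_le _ _).trans
    (Nat.add_le_add_left (card_insert_le _ _) _))
  have := four_mul_card_add_self_sdiff_add_two_mul_card_le hG hα hΦ
  omega

end Finset

section LieAlgebra
variable {R L : Type*} [CommRing R] [LieRing L] [LieAlgebra R L]

theorem CharTwo.leibniz_lie_lie [CharP R 2] (x y z : L) :
    ⁅x, ⁅x, ⁅y, z⁆⁆⁆ = ⁅⁅x, ⁅x, y⁆⁆, z⁆ + ⁅y, ⁅x, ⁅x, z⁆⁆⁆ := by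
  have h2 : ∀ w : L, w + w = 0 := fun w => by rw [← two_smul R, CharTwo.two_eq_zero, zero_smul]
  rw [leibniz_lie x y z, lie_add, leibniz_lie, leibniz_lie x y, add_assoc, ← add_assoc _ _ ⁅y, _⁆,
    h2, zero_add]

theorem Submodule.lie_mem_of_span_eq_top {B : Set L} (hB : span R B = ⊤) {W : Submodule R L}
    {v : L} (h : ∀ x ∈ B, ⁅x, v⁆ ∈ W) (x : L) : ⁅x, v⁆ ∈ W := by
  have hx : x ∈ span R B := hB ▸ mem_top
  induction hx using span_induction with
  | mem x hx => exact h x hx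
  | zero => simp
  | add x y _ _ hx hy => rw [add_lie]; exact W.add_mem hx hy
  | smul c x _ hx => rw [smul_lie]; exact W.smul_mem c hx

theorem LieAlgebra.IsSimple.span_union_image2_lie_eq_top [LieAlgebra.IsSimple R L] {S : Set L}
    (hS : span R S ≠ ⊥)
    (h : ∀ x : L, ∀ v ∈ S, ⁅x, v⁆ ∈ span R (S ∪ image2 (⁅·, ·⁆) S S)) :
    span R (S ∪ image2 (⁅·, ·⁆) S S) = ⊤ := by
  set W := span R (S ∪ image2 (⁅·, ·⁆) S S)
  have hW : ∀ x : L, ∀ w ∈ W, ⁅x, w⁆ ∈ W := by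
    intro x w hw
    induction hw using span_induction with
    | mem w hw =>
      rcases hw with hw | ⟨u, hu, v, hv, rfl⟩
      · exact h x w hw
      · rw [leibniz_lie]
        refine W.add_mem (h _ v hv) ?_
        rw [← lie_skew, neg_mem_iff]
        exact h _ u hu
    | zero => simp
    | add w w' _ _ hw hw' => rw [lie_add]; exact W.add_mem hw hw'
    | smul c w _ hw => rw [lie_smul]; exact W.smul_mem c hw
  let I : LieIdeal R L := { W with lie_mem := fun {x w} hw => hW x w hw }
  rcases LieAlgebra.IsSimple.eq_bot_or_eq_top I with hI | hI
  · refine absurd (eq_bot_iff.2 ?_) hS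
    calc span R S ≤ W := span_mono subset_union_left
      _ = ⊥ := congrArg LieSubmodule.toSubmodule hI
  · exact congrArg LieSubmodule.toSubmodule hI

end LieAlgebra

section Thin
variable {G L : Type*} [LieRing L]

def IsThin_s17 [Add G] (e : G → L) : Prop :=
  ∀ α β, ⁅e α, e β⁆ = 0 ∨ ⁅e α, e β⁆ = e (α + β)

open Classical in
/-- The paper's `Φ₁`, the roots whose root vectors lie in the generalized `1`-eigenspace of
`ad (e α)`: for a thin family `ad (e α) ^ 2` either fixes or kills each `e γ`. -/
noncomputable def oneRoots [Fintype G] (e : G → L) (α : G) : Finset G :=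
  {γ | e γ ≠ 0 ∧ ⁅e α, ⁅e α, e γ⁆⁆ = e γ}

variable {e : G → L} {α γ : G}

theorem mem_oneRoots [Fintype G] : γ ∈ oneRoots e α ↔ e γ ≠ 0 ∧ ⁅e α, ⁅e α, e γ⁆⁆ = e γ := by
  simp [oneRoots]

theorem card_oneRoots_le_rootMultiplicity [Zero G] [Fintype G] {K : Type*} [Field K] [CharP K 2]
    [LieAlgebra K L] [FiniteDimensional K L] (b : Basis {γ : G // γ ≠ 0} K L)
    (hb : ∀ γ (hγ : γ ≠ 0), e γ = b ⟨γ, hγ⟩) (he0 : e 0 = 0) :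
    #(oneRoots e α) ≤ (ad K L (e α)).charpoly.rootMultiplicity 1 := by
  have hne : ∀ γ ∈ oneRoots e α, γ ≠ 0 := fun γ hγ h => (mem_oneRoots.1 hγ).1 (h ▸ he0)
  have hind : LinearIndependent K fun γ : oneRoots e α => e γ := by
    convert b.linearIndependent.comp (fun γ : oneRoots e α => ⟨γ, hne γ γ.2⟩)
      fun _ _ h => Subtype.ext (by simpa using h) with γ
    exact hb γ _
  rw [← Fintype.card_coe]
  exact (ad K L (e α)).card_le_rootMultiplicity_one_of_apply_apply_eq_self hind
    fun γ => (mem_oneRoots.1 γ.2).2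

namespace IsThin_s17
variable [AddCommGroup G]

theorem lie_lie_eq_zero_or_self (he : IsThin_s17 e) (hG : ∀ x : G, x + x = 0) (α γ : G) :
    ⁅e α, ⁅e α, e γ⁆⁆ = 0 ∨ ⁅e α, ⁅e α, e γ⁆⁆ = e γ := by
  rcases he α γ with h | h
  · simp [h]
  · rw [h]
    refine (he α (α + γ)).imp_right fun h' => ?_
    rw [h', ← add_assoc, hG, zero_add]

theorem span_union_image2_lie_le {R : Type*} [CommRing R] [LieAlgebra R L] [DecidableEq G]
    (he : IsThin_s17 e) (he0 : e 0 = 0) (Φ : Finset G) :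
    span R (e '' Φ ∪ image2 (⁅·, ·⁆) (e '' Φ) (e '' Φ)) ≤
      span R (e '' ((Φ ∪ (Φ + Φ)).erase 0 : Finset G)) := by
  have hmem : ∀ γ ∈ Φ ∪ (Φ + Φ), e γ ∈ span R (e '' ((Φ ∪ (Φ + Φ)).erase 0 : Finset G)) := by
    intro γ hγ
    by_cases h0 : γ = 0
    · rw [h0, he0]; exact zero_mem _
    · exact subset_span (mem_image_of_mem e (Finset.mem_erase.2 ⟨h0, hγ⟩))
  rw [span_le]
  rintro _ (⟨γ, hγ, rfl⟩ | ⟨_, ⟨γ, hγ, rfl⟩, _, ⟨δ, hδ, rfl⟩, rfl⟩)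
  · exact hmem γ (Finset.mem_union_left _ hγ)
  · change ⁅e γ, e δ⁆ ∈ _
    rcases he γ δ with h | h
    · rw [h]; exact zero_mem _
    · rw [h]; exact hmem _ (Finset.mem_union_right _ (Finset.add_mem_add hγ hδ))

variable [Fintype G]

theorem lie_eq_of_mem_oneRoots (he : IsThin_s17 e) (hγ : γ ∈ oneRoots e α) :
    ⁅e α, e γ⁆ = e (α + γ) := by
  obtain ⟨hγ0, hγ⟩ := mem_oneRoots.1 hγ
  refine (he α γ).resolve_left fun h => hγ0 ?_
  rw [← hγ, h, lie_zero]

theorem add_mem_oneRoots (he : IsThin_s17 e) (hγ : γ ∈ oneRoots e α) : α + γ ∈ oneRoots e α := by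
  obtain ⟨hγ0, hγ2⟩ := mem_oneRoots.1 hγ
  have hαγ := he.lie_eq_of_mem_oneRoots hγ
  refine mem_oneRoots.2 ⟨fun h => hγ0 ?_, by rw [← hαγ, hγ2]⟩
  rw [← hγ2, hαγ, h, lie_zero]

theorem oneRoots_nonempty {K : Type*} [Field K] [LieAlgebra K L] [FiniteDimensional K L]
    (he : IsThin_s17 e) (hG : ∀ x : G, x + x = 0) (hspan : span K (range e) = ⊤)
    (hα : (ad K L (e α)).charpoly.rootMultiplicity 1 ≠ 0) : (oneRoots e α).Nonempty := by
  rw [Finset.nonempty_iff_ne_empty]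
  intro hempty
  have hnil : IsNilpotent (ad K L (e α)) := by
    refine ⟨2, LinearMap.ext_on_range hspan fun γ => ?_⟩
    rw [sq, End.mul_apply, ad_apply, ad_apply, LinearMap.zero_apply]
    refine (he.lie_lie_eq_zero_or_self hG α γ).elim id fun h => ?_
    by_cases hγ0 : e γ = 0
    · rw [h, hγ0]
    · exact absurd (mem_oneRoots.2 ⟨hγ0, h⟩) (hempty ▸ Finset.notMem_empty γ)
  rw [hnil.charpoly_eq_X_pow_finrank] at hα
  exact hα (rootMultiplicity_eq_zero (by simp))

theorem lie_mem_span_oneRoots {R : Type*} [CommRing R] [CharP R 2] [LieAlgebra R L]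
    (he : IsThin_s17 e) (hG : ∀ x : G, x + x = 0) (β : G) (hγ : γ ∈ oneRoots e α) :
    ⁅e β, e γ⁆ ∈ span R (e '' oneRoots e α ∪
      image2 (⁅·, ·⁆) (e '' oneRoots e α) (e '' oneRoots e α)) := by
  by_cases hβ : β ∈ oneRoots e α
  · exact subset_span (Or.inr (mem_image2_of_mem (mem_image_of_mem e hβ) (mem_image_of_mem e hγ)))
  rcases he β γ with h | h
  · rw [h]; exact zero_mem _
  by_cases h0 : e (β + γ) = 0
  · rw [h, h0]; exact zero_mem _
  have hβ2 : ⁅e α, ⁅e α, e β⁆⁆ = 0 := by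
    refine (he.lie_lie_eq_zero_or_self hG α β).resolve_right fun h2 =>
      hβ (mem_oneRoots.2 ⟨fun hβ0 => h0 ?_, h2⟩)
    rw [← h, hβ0, zero_lie]
  rw [h]
  refine subset_span (Or.inl (mem_image_of_mem e (mem_oneRoots.2 ⟨h0, ?_⟩)))
  rw [← h, CharTwo.leibniz_lie_lie (R := R), hβ2, (mem_oneRoots.1 hγ).2, zero_lie, zero_add]

theorem finrank_le_card_erase_zero_union_add_self {K : Type*} [Field K] [CharP K 2]
    [LieAlgebra K L] [LieAlgebra.IsSimple K L] [FiniteDimensional K L] [DecidableEq G]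
    (he : IsThin_s17 e) (hG : ∀ x : G, x + x = 0) (he0 : e 0 = 0) (hspan : span K (range e) = ⊤)
    (hα : (oneRoots e α).Nonempty) :
    finrank K L ≤ #((oneRoots e α ∪ (oneRoots e α + oneRoots e α)).erase 0) := by
  obtain ⟨γ₀, hγ₀⟩ := hα
  have htop := LieAlgebra.IsSimple.span_union_image2_lie_eq_top (S := e '' oneRoots e α)
    (fun h => (mem_oneRoots.1 hγ₀).1 (span_eq_bot.1 h _ (mem_image_of_mem e hγ₀)))
    fun x _ ⟨γ, hγ, hv⟩ => hv ▸ lie_mem_of_span_eq_top hspan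
      (fun _ ⟨β, hβ⟩ => hβ ▸ he.lie_mem_span_oneRoots hG β hγ) x
  rw [← finrank_top K L, ← htop]
  refine (Submodule.finrank_mono (he.span_union_image2_lie_le he0 _)).trans ?_
  classical
  rw [← Finset.coe_image]
  exact (finrank_span_finset_le_card _).trans Finset.card_image_le

end IsThin_s17
end Thin

/-- Let `L` be a simple thin Lie algebra over `GF(2)` of dimension
`2^n - 1` and `α` a root with `ad (e α)` having characteristic polynomial
`t^r (t+1)^(2s)`, `s > 0`.  Then `s(s+1) ≥ 2^n - 2`. -/
theorem thin_simple_s_bound {n : ℕ} {L : Type*}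
    [LieRing L] [LieAlgebra (ZMod 2) L] [LieAlgebra.IsSimple (ZMod 2) L]
    [Module.Finite (ZMod 2) L]
    (b : Module.Basis {v : Fin n → ZMod 2 // v ≠ 0} (ZMod 2) L)
    (e : (Fin n → ZMod 2) → L)
    (he : ∀ (v : Fin n → ZMod 2) (hv : v ≠ 0), e v = b ⟨v, hv⟩)
    (he0 : e 0 = 0)
    (hbr : ∀ α β : Fin n → ZMod 2, ⁅e α, e β⁆ = 0 ∨ ⁅e α, e β⁆ = e (α + β))
    (α : Fin n → ZMod 2) (hα : α ≠ 0) (r s : ℕ) (hs : 0 < s)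
    (hchar : LinearMap.charpoly (LieAlgebra.ad (ZMod 2) L (e α)) =
      Polynomial.X ^ r * (Polynomial.X + 1) ^ (2 * s)) :
    2 ^ n - 2 ≤ s * (s + 1) := by
  classical
  have hthin : IsThin_s17 e := hbr
  have hG : ∀ x : Fin n → ZMod 2, x + x = 0 := fun x =>
    funext fun i => CharTwo.add_self_eq_zero (x i)
  have hspan : span (ZMod 2) (range e) = ⊤ :=
    eq_top_mono (span_mono (by rintro _ ⟨i, rfl⟩; exact ⟨i, he i i.2⟩)) b.span_eq
  have hmult : (ad (ZMod 2) L (e α)).charpoly.rootMultiplicity 1 = 2 * s := by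
    rw [hchar, Polynomial.rootMultiplicity_one_X_pow_mul_X_add_one_pow]
  have hdim : finrank (ZMod 2) L = 2 ^ n - 1 := by
    rw [finrank_eq_card_basis b]; simp [Fintype.card_subtype_compl]
  have hΦ_card : #(oneRoots e α) ≤ 2 * s := hmult ▸ card_oneRoots_le_rootMultiplicity b he he0
  have hrank := hthin.finrank_le_card_erase_zero_union_add_self hG he0 hspan
    (hthin.oneRoots_nonempty hG hspan (by rw [hmult]; omega))
  have hcount := four_mul_card_erase_zero_union_add_self_le hG hα
    fun γ hγ => hthin.add_mem_oneRoots (α := α) hγ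
  have : #((oneRoots e α ∪ (oneRoots e α + oneRoots e α)).erase 0) ≤ s * (s + 1) + 1 := by
    nlinarith
  omega
end

section
/- Let K/k be a finite extension of fields and L a simple Lie algebra over K of dimension n ≥ 1. Then the Weil restriction R_{K/k}(L), i.e., L viewed as a Lie algebra over k by restriction of scalars, is a simple Lie algebra over k of dimension [K:k]·n. -/
/-!
For a `k`-ideal `I` of `L`, the set `{z | K • z ⊆ I}` is the largest `K`-ideal inside `I`, and it
contains `⁅L, I⁆` because `c • ⁅x, y⁆ = ⁅c • x, y⁆`. By simplicity over `K`, either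
`⁅L, I⁆ = 0`, so that `I` lies in the centre, which is trivial, or `I` contains a `K`-ideal that
is all of `L`. The dimension formula is the tower law.
-/

namespace LieIdeal

variable {k L : Type*} (K : Type*) [CommRing k] [CommRing K] [LieRing L] [LieAlgebra K L]
  [LieAlgebra k L]

def core (I : LieIdeal k L) : LieIdeal K L where
  carrier := {z | ∀ c : K, c • z ∈ I}
  add_mem' ha hb c := by
    rw [smul_add]
    exact add_mem (ha c) (hb c)
  zero_mem' c := by
    rw [smul_zero]
    exact zero_mem I
  smul_mem' c' _ hz c := by
    rw [smul_smul]
    exact hz (c * c')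
  lie_mem {m _} hz c := by
    rw [← lie_smul]
    exact lie_mem_right k L I _ _ (hz c)

variable {K} {I : LieIdeal k L}

theorem mem_of_mem_core {z : L} (hz : z ∈ I.core K) : z ∈ I := by
  simpa using hz 1

theorem lie_mem_core (x : L) {y : L} (hy : y ∈ I) : ⁅x, y⁆ ∈ I.core K := fun c => by
  rw [← smul_lie]
  exact lie_mem_right k L I _ _ hy

theorem eq_top_of_core_eq_top (h : I.core K = ⊤) : I = ⊤ :=
  eq_top_iff.mpr fun z _ => mem_of_mem_core (h ▸ LieSubmodule.mem_top z : z ∈ I.core K)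

end LieIdeal

namespace LieAlgebra

theorem IsSimple.restrictScalars (k K : Type*) {L : Type*} [CommRing k] [Field K] [LieRing L]
    [LieAlgebra K L] [LieAlgebra k L] [IsSimple K L] : IsSimple k L := by
  refine ⟨fun I => ?_, IsSimple.non_abelian K⟩
  by_cases hI : ∀ x : L, ∀ y ∈ I, ⁅x, y⁆ = 0
  · refine .inl (eq_bot_iff.mpr fun y hy => ?_)
    have hy_center : y ∈ center K L :=
      (LieModule.mem_maxTrivSubmodule K L L y).mpr fun x => hI x y hy
    simpa using hy_center
  · push Not at hI
    obtain ⟨x, y, hy, hxy⟩ := hI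
    refine .inr (LieIdeal.eq_top_of_core_eq_top (K := K) ?_)
    refine (IsSimple.eq_bot_or_eq_top _).resolve_left fun hbot => hxy ?_
    simpa [hbot] using LieIdeal.lie_mem_core (K := K) x hy

end LieAlgebra

theorem weil_restriction_simple_general {k K L : Type*} [Field k] [Field K] [Algebra k K]
    [LieRing L] [LieAlgebra K L]
    [Module k L] [IsScalarTower k K L] [LieAlgebra k L]
    [LieAlgebra.IsSimple K L] :
    LieAlgebra.IsSimple k L ∧
      Module.finrank k L = Module.finrank k K * Module.finrank K L :=
  ⟨.restrictScalars k K, (Module.finrank_mul_finrank k K L).symm⟩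

/-- If `K/k` is a finite field extension and `L` a simple Lie algebra
over `K` (of dimension `n ≥ 1`, automatic from simplicity), then the Weil restriction
`R_{K/k}(L)` — the same Lie ring viewed as a Lie algebra over `k` — is simple over `k`
and has `k`-dimension `[K:k] · dim_K L`. -/
theorem weil_restriction_simple {k K L : Type*} [Field k] [Field K] [Algebra k K]
    [FiniteDimensional k K]
    [LieRing L] [LieAlgebra K L] [FiniteDimensional K L]
    [Module k L] [IsScalarTower k K L] [LieAlgebra k L]
    [LieAlgebra.IsSimple K L] :
    LieAlgebra.IsSimple k L ∧
      Module.finrank k L = Module.finrank k K * Module.finrank K L :=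
  weil_restriction_simple_general
end
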